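/- Let Q ⊂ ℝ^N be a bounded Lebesgue-measurable set, let p₁, …, p_N: Q → ℝ be measurable with 1 < p_i⁻ ≤ p_i(x) ≤ p_i⁺ < ∞ a.e. for each i, and let a = (a_1, …, a_N): Q × ℝ × ℝ^N → ℝ^N satisfy the growth, strict monotonicity and coercivity conditions. Fix k > 0 and let w_m, w: Q → ℝ be measurable with |w_m(x)| ≤ k for a.e. x, w_m → w a.e. in Q, and let v_m, v: Q → ℝ^N be measurable with sup_m ∫_Q Σ_{i=1}^N |v_{m,i}(x)|^{p_i(x)} dx < ∞ and ∫_Q Σ_{i=1}^N |v_i(x)|^{p_i(x)} dx < ∞. If lim_{m→∞} ∫_Q (a(x, w_m(x), v_m(x)) − a(x, w_m(x), v(x))) · (v_m(x) − v(x)) dx = 0, then along a subsequence v_m(x) → v(x) for a.e. x ∈ Q. -/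

import Mathlib

/-!
The integrands `g m = (a(x, w m, v m) - a(x, w m, v)) · (v m - v)` are nonnegative by
monotonicity, and the growth condition together with Young's inequality dominates them by
`6 Σ âᵢ(k) (Σⱼ |v m j|^pⱼ + Σⱼ |vⱼ|^pⱼ + cᵢ^pᵢ')`, which is integrable. Hence `g m → 0` in `L¹`
and a subsequence tends to `0` almost everywhere. At such a point `x`, coercivity and the
sublinear growth of `a` keep `v m x` bounded, and by continuity every cluster point `ξ` satisfies
`(a(x, w x, ξ) - a(x, w x, v x)) · (ξ - v x) = 0`, so `ξ = v x` by strict monotonicity.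
-/

open MeasureTheory Filter ENNReal

/-- The conjugate exponent `q' = q / (q - 1)`. -/
noncomputable def conjExp (q : ℝ) : ℝ := q / (q - 1)

open Asymptotics Topology TopologicalSpace

lemma holderConjugate_conjExp {q : ℝ} (hq : 1 < q) : q.HolderConjugate (conjExp q) :=
  Real.HolderConjugate.conjExponent hq

lemma mul_le_rpow_add_rpow {a b p q : ℝ} (ha : 0 ≤ a) (hb : 0 ≤ b) (hpq : p.HolderConjugate q) :
    a * b ≤ a ^ p + b ^ q :=
  (Real.young_inequality_of_nonneg ha hb hpq).trans <| add_le_add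
    (div_le_self (Real.rpow_nonneg ha p) hpq.lt.le)
    (div_le_self (Real.rpow_nonneg hb q) hpq.symm.lt.le)

lemma isLittleO_rpow_id_atTop {e : ℝ} (he : e < 1) : (fun t : ℝ => t ^ e) =o[atTop] id := by
  change _ =o[atTop] fun t => t
  rw [isLittleO_iff_tendsto' ((eventually_gt_atTop 0).mono fun t ht h0 => absurd h0 ht.ne')]
  have h := tendsto_rpow_neg_atTop (sub_pos.mpr he)
  rw [neg_sub] at h
  refine h.congr' ((eventually_gt_atTop 0).mono fun t ht => ?_)
  rw [Real.rpow_sub_one ht.ne']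

lemma exists_le_of_mul_le_of_isLittleO {f : ℝ → ℝ} (hf : f =o[atTop] id) {α : ℝ} (hα : 0 < α) :
    ∃ R, ∀ t, α * t ≤ f t → t ≤ R := by
  obtain ⟨R, hR⟩ := eventually_atTop.mp (hf.bound (half_pos hα))
  refine ⟨max R 0, fun t ht => le_of_not_gt fun hlt => ?_⟩
  have hpos : 0 < t := (le_max_right R 0).trans_lt hlt
  have := (le_abs_self (f t)).trans (hR t ((le_max_left R 0).trans hlt.le))
  rw [id_eq, Real.norm_eq_abs, abs_of_pos hpos] at this
  nlinarith

noncomputable def modular {ι : Type*} [Fintype ι] (p ξ : ι → ℝ) : ℝ := ∑ i, |ξ i| ^ p i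

section Modular

variable {ι : Type*} [Fintype ι] {p ξ : ι → ℝ}

lemma modular_nonneg : 0 ≤ modular p ξ :=
  Finset.sum_nonneg fun _ _ => Real.rpow_nonneg (abs_nonneg _) _

lemma rpow_le_modular (i : ι) : |ξ i| ^ p i ≤ modular p ξ :=
  Finset.single_le_sum (f := fun i => |ξ i| ^ p i)
    (fun _ _ => Real.rpow_nonneg (abs_nonneg _) _) (Finset.mem_univ i)

lemma abs_le_modular_rpow_inv {i : ι} (hp : 0 < p i) : |ξ i| ≤ modular p ξ ^ (p i)⁻¹ := by
  rw [← Real.rpow_rpow_inv (abs_nonneg (ξ i)) hp.ne']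
  exact Real.rpow_le_rpow (Real.rpow_nonneg (abs_nonneg _) _) (rpow_le_modular i)
    (inv_nonneg.mpr hp.le)

lemma norm_le_max_one_modular (hp : ∀ i, 1 ≤ p i) : ‖ξ‖ ≤ max 1 (modular p ξ) := by
  refine (pi_norm_le_iff_of_nonneg (zero_le_one.trans (le_max_left _ _))).mpr fun i => ?_
  have hp0 : 0 < p i := zero_lt_one.trans_le (hp i)
  calc ‖ξ i‖ = |ξ i| := Real.norm_eq_abs _
    _ ≤ modular p ξ ^ (p i)⁻¹ := abs_le_modular_rpow_inv hp0
    _ ≤ max 1 (modular p ξ) ^ (p i)⁻¹ :=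
        Real.rpow_le_rpow modular_nonneg (le_max_right _ _) (inv_nonneg.mpr hp0.le)
    _ ≤ max 1 (modular p ξ) ^ (1 : ℝ) :=
        Real.rpow_le_rpow_of_exponent_le (le_max_left _ _) (inv_le_one_of_one_le₀ (hp i))
    _ = max 1 (modular p ξ) := Real.rpow_one _

end Modular

lemma abs_sub_mul_sub_le {A B y z X Y K c p q : ℝ} (hpq : p.HolderConjugate q) (hK : 0 ≤ K)
    (hc : 0 ≤ c) (hyX : |y| ^ p ≤ X) (hzY : |z| ^ p ≤ Y) (hA : |A| ≤ K * (X ^ (1 / q) + c))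
    (hB : |B| ≤ K * (Y ^ (1 / q) + c)) :
    |(A - B) * (y - z)| ≤ 6 * K * (X + Y + c ^ q) := by
  have hX : 0 ≤ X := (Real.rpow_nonneg (abs_nonneg y) p).trans hyX
  have hY : 0 ≤ Y := (Real.rpow_nonneg (abs_nonneg z) p).trans hzY
  have hq : q ≠ 0 := hpq.symm.ne_zero
  have hXq : (X ^ (1 / q)) ^ q = X := by rw [one_div, Real.rpow_inv_rpow hX hq]
  have hYq : (Y ^ (1 / q)) ^ q = Y := by rw [one_div, Real.rpow_inv_rpow hY hq]
  have young : ∀ {u : ℝ} (w : ℝ), 0 ≤ u → u * |w| ≤ u ^ q + |w| ^ p := fun w hu =>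
    mul_le_rpow_add_rpow hu (abs_nonneg w) hpq.symm
  have h1 := young y (Real.rpow_nonneg hX (1 / q))
  have h2 := young z (Real.rpow_nonneg hX (1 / q))
  have h3 := young y (Real.rpow_nonneg hY (1 / q))
  have h4 := young z (Real.rpow_nonneg hY (1 / q))
  have h5 := young y hc
  have h6 := young z hc
  rw [hXq] at h1 h2
  rw [hYq] at h3 h4
  calc |(A - B) * (y - z)| ≤ (|A| + |B|) * (|y| + |z|) := by
        rw [abs_mul]
        exact mul_le_mul (abs_sub _ _) (abs_sub _ _) (abs_nonneg _) (by positivity)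
    _ ≤ K * (X ^ (1 / q) + Y ^ (1 / q) + 2 * c) * (|y| + |z|) := by
        gcongr; linarith
    _ = K * (X ^ (1 / q) * |y| + X ^ (1 / q) * |z| + Y ^ (1 / q) * |y| + Y ^ (1 / q) * |z|
          + 2 * (c * |y|) + 2 * (c * |z|)) := by ring
    _ ≤ K * (6 * (X + Y + c ^ q)) := by gcongr; linarith [Real.rpow_nonneg hc q]
    _ = 6 * K * (X + Y + c ^ q) := by ring

lemma dotProduct_sub_nonneg_of_strictMonotone {ι : Type*} [Fintype ι] {f : (ι → ℝ) → ι → ℝ}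
    (hf : ∀ η η', η ≠ η' → 0 < (f η - f η') ⬝ᵥ (η - η')) (η η' : ι → ℝ) :
    0 ≤ (f η - f η') ⬝ᵥ (η - η') := by
  rcases eq_or_ne η η' with rfl | hne
  · simp
  · exact (hf η η' hne).le

section Pointwise

variable {ι : Type*} [Fintype ι] {p e K C : ι → ℝ} {a : ℝ → (ι → ℝ) → ι → ℝ} {k α s₀ : ℝ}
  {s : ℕ → ℝ} {ξ : ℕ → ι → ℝ} {ξ₀ : ι → ℝ}

lemma bddAbove_modular_of_tendsto_dotProduct (hp : ∀ i, 1 < p i) (he : ∀ i, e i < 1)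
    (hcont : Continuous (Function.uncurry a))
    (hgrowth : ∀ t, |t| ≤ k → ∀ η i, |a t η i| ≤ K i * (modular p η ^ e i + C i))
    (hα : 0 < α) (hcoer : ∀ t η, α * modular p η ≤ a t η ⬝ᵥ η)
    (hs : ∀ m, |s m| ≤ k) (hs₀ : Tendsto s atTop (𝓝 s₀))
    (hg : Tendsto (fun m => (a (s m) (ξ m) - a (s m) ξ₀) ⬝ᵥ (ξ m - ξ₀)) atTop (𝓝 0)) :
    BddAbove (Set.range fun m => modular p (ξ m)) := by
  obtain ⟨G, hG⟩ := hg.bddAbove_range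
  obtain ⟨M, hM⟩ :=
    ((hcont.tendsto (s₀, ξ₀)).comp (hs₀.prodMk_nhds tendsto_const_nhds)).norm.bddAbove_range
  have hM' : ∀ m i, |a (s m) ξ₀ i| ≤ M := fun m i =>
    (norm_le_pi_norm (a (s m) ξ₀) i).trans (hM ⟨m, rfl⟩)
  have hM0 : 0 ≤ M := (norm_nonneg _).trans (hM ⟨0, rfl⟩)
  set f : ℝ → ℝ := fun t =>
    G + ∑ i, (K i * |ξ₀ i| * (t ^ e i + C i) + M * (t ^ (p i)⁻¹ + |ξ₀ i|))
  have hf : f =o[atTop] id :=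
    (isLittleO_const_id_atTop G).add <| IsLittleO.fun_sum fun i _ =>
      (((isLittleO_rpow_id_atTop (he i)).add (isLittleO_const_id_atTop _)).const_mul_left _).add
      (((isLittleO_rpow_id_atTop (inv_lt_one_of_one_lt₀ (hp i))).add
        (isLittleO_const_id_atTop _)).const_mul_left _)
  obtain ⟨R, hR⟩ := exists_le_of_mul_le_of_isLittleO hf hα
  refine ⟨R, Set.forall_mem_range.mpr fun m => hR _ ?_⟩
  calc α * modular p (ξ m) ≤ a (s m) (ξ m) ⬝ᵥ ξ m := hcoer _ _
    _ = (a (s m) (ξ m) - a (s m) ξ₀) ⬝ᵥ (ξ m - ξ₀)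
          + ∑ i, (a (s m) (ξ m) i * ξ₀ i + a (s m) ξ₀ i * (ξ m i - ξ₀ i)) := by
        simp only [dotProduct, Pi.sub_apply, ← Finset.sum_add_distrib]
        exact Finset.sum_congr rfl fun i _ => by ring
    _ ≤ f (modular p (ξ m)) := by
        refine add_le_add (hG ⟨m, rfl⟩) (Finset.sum_le_sum fun i _ => add_le_add ?_ ?_)
        · calc a (s m) (ξ m) i * ξ₀ i ≤ |a (s m) (ξ m) i| * |ξ₀ i| :=
                (le_abs_self _).trans (abs_mul _ _).le
            _ ≤ K i * (modular p (ξ m) ^ e i + C i) * |ξ₀ i| :=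
                mul_le_mul_of_nonneg_right (hgrowth _ (hs m) _ i) (abs_nonneg _)
            _ = K i * |ξ₀ i| * (modular p (ξ m) ^ e i + C i) := by ring
        · calc a (s m) ξ₀ i * (ξ m i - ξ₀ i) ≤ |a (s m) ξ₀ i| * |ξ m i - ξ₀ i| :=
                (le_abs_self _).trans (abs_mul _ _).le
            _ ≤ M * (modular p (ξ m) ^ (p i)⁻¹ + |ξ₀ i|) :=
                mul_le_mul (hM' m i) ((abs_sub _ _).trans
                  (add_le_add_left (abs_le_modular_rpow_inv (zero_lt_one.trans (hp i))) _))
                  (abs_nonneg _) hM0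

theorem tendsto_of_tendsto_dotProduct_sub (hp : ∀ i, 1 < p i) (he : ∀ i, e i < 1)
    (hcont : Continuous (Function.uncurry a))
    (hgrowth : ∀ t, |t| ≤ k → ∀ η i, |a t η i| ≤ K i * (modular p η ^ e i + C i))
    (hmono : ∀ t η η', η ≠ η' → 0 < (a t η - a t η') ⬝ᵥ (η - η'))
    (hα : 0 < α) (hcoer : ∀ t η, α * modular p η ≤ a t η ⬝ᵥ η)
    (hs : ∀ m, |s m| ≤ k) (hs₀ : Tendsto s atTop (𝓝 s₀))
    (hg : Tendsto (fun m => (a (s m) (ξ m) - a (s m) ξ₀) ⬝ᵥ (ξ m - ξ₀)) atTop (𝓝 0)) :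
    Tendsto ξ atTop (𝓝 ξ₀) := by
  obtain ⟨R, hR⟩ :=
    bddAbove_modular_of_tendsto_dotProduct hp he hcont hgrowth hα hcoer hs hs₀ hg
  refine (isCompact_closedBall (0 : ι → ℝ) (max 1 R)).tendsto_nhds_of_unique_mapClusterPt
    (Eventually.of_forall fun m => ?_) fun ξ' _ hξ' => ?_
  · exact mem_closedBall_zero_iff.mpr ((norm_le_max_one_modular fun i => (hp i).le).trans
      (max_le_max le_rfl (hR ⟨m, rfl⟩)))
  obtain ⟨ψ, hψ, hξψ⟩ := hξ'.tendsto_subseq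
  have hF : Continuous fun q : ℝ × (ι → ℝ) => (a q.1 q.2 - a q.1 ξ₀) ⬝ᵥ (q.2 - ξ₀) :=
    (hcont.sub (hcont.comp (continuous_fst.prodMk continuous_const))).dotProduct
      (continuous_snd.sub continuous_const)
  have hzero : (a s₀ ξ' - a s₀ ξ₀) ⬝ᵥ (ξ' - ξ₀) = 0 :=
    tendsto_nhds_unique ((hF.tendsto (s₀, ξ')).comp
      ((hs₀.comp hψ.tendsto_atTop).prodMk_nhds hξψ)) (hg.comp hψ.tendsto_atTop)
  by_contra hne
  exact (hmono s₀ ξ' ξ₀ hne).ne' hzero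

end Pointwise

lemma aemeasurable_comp_of_caratheodory {X Y Z : Type*} [MeasurableSpace X] {μ : Measure X}
    [TopologicalSpace Y] [MetrizableSpace Y] [MeasurableSpace Y] [SecondCountableTopology Y]
    [OpensMeasurableSpace Y] [TopologicalSpace Z] [PseudoMetrizableSpace Z] [MeasurableSpace Z]
    [BorelSpace Z] [Nonempty Z] {f : X → Y → Z} (hmeas : ∀ y, Measurable fun x => f x y)
    (hcont : ∀ᵐ x ∂μ, Continuous (f x)) {g : X → Y} (hg : Measurable g) :
    AEMeasurable (fun x => f x (g x)) μ := by
  classical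
  set E := toMeasurable μ {x | ¬Continuous (f x)}
  -- modify `f` on a measurable null set so that it becomes continuous in `y` everywhere
  set u : Y → X → Z := fun y => E.piecewise (fun _ => Classical.arbitrary Z) (f · y)
  have hu_cont : ∀ x, Continuous fun y => u y x := by
    intro x
    by_cases hx : x ∈ E
    · simpa only [u, Set.piecewise_eq_of_mem _ _ _ hx] using continuous_const
    · simp only [u, Set.piecewise_eq_of_notMem _ _ _ hx]
      by_contra h
      exact hx (subset_toMeasurable μ _ h)
  have hu : Measurable (Function.uncurry u) :=
    measurable_uncurry_of_continuous_of_measurable hu_cont fun y =>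
      Measurable.piecewise (measurableSet_toMeasurable μ _) measurable_const (hmeas y)
  refine ⟨fun x => u (g x) x, hu.comp (hg.prodMk measurable_id), ?_⟩
  have hE : ∀ᵐ x ∂μ, x ∉ E := by
    rw [ae_iff]
    simpa [E, measure_toMeasurable] using ae_iff.mp hcont
  filter_upwards [hE] with x hx
  simp only [u, Set.piecewise_eq_of_notMem _ _ _ hx]

lemma exists_seq_tendsto_ae_zero_of_integral_tendsto_zero {X : Type*} [MeasurableSpace X]
    {μ : Measure X} {g : ℕ → X → ℝ} (hg0 : ∀ m, 0 ≤ᵐ[μ] g m) (hg : ∀ m, Integrable (g m) μ)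
    (hlim : Tendsto (fun m => ∫ x, g m x ∂μ) atTop (𝓝 0)) :
    ∃ φ : ℕ → ℕ, StrictMono φ ∧ ∀ᵐ x ∂μ, Tendsto (fun m => g (φ m) x) atTop (𝓝 0) := by
  have hnorm : ∀ m, eLpNorm (g m - fun _ => 0) 1 μ = ENNReal.ofReal (∫ x, g m x ∂μ) := fun m => by
    rw [← Pi.zero_def, sub_zero, eLpNorm_one_eq_lintegral_enorm,
      ← ofReal_integral_norm_eq_lintegral_enorm (hg m)]
    congr 1
    exact integral_congr_ae ((hg0 m).mono fun x hx => Real.norm_of_nonneg hx)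
  refine (tendstoInMeasure_of_tendsto_eLpNorm one_ne_zero (fun m => (hg m).aestronglyMeasurable)
    aestronglyMeasurable_const ?_).exists_seq_tendsto_ae
  simpa only [hnorm, ENNReal.ofReal_zero] using ENNReal.tendsto_ofReal hlim

lemma aestronglyMeasurable_dotProduct_sub_of_caratheodory {X ι : Type*} [MeasurableSpace X]
    {μ : Measure X} [Fintype ι] {a : X → ℝ → (ι → ℝ) → ι → ℝ}
    (hmeas : ∀ s η, Measurable fun x => a x s η)
    (hcont : ∀ᵐ x ∂μ, Continuous fun sη : ℝ × (ι → ℝ) => a x sη.1 sη.2)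
    {z : X → ℝ} {y y' : X → ι → ℝ} (hz : Measurable z) (hy : Measurable y)
    (hy' : Measurable y') :
    AEStronglyMeasurable (fun x => (a x (z x) (y x) - a x (z x) (y' x)) ⬝ᵥ (y x - y' x)) μ := by
  have hcomp : ∀ {η : X → ι → ℝ}, Measurable η → AEMeasurable (fun x => a x (z x) (η x)) μ :=
    fun hη => aemeasurable_comp_of_caratheodory (f := fun x sη => a x sη.1 sη.2)
      (fun sη => hmeas sη.1 sη.2) hcont (hz.prodMk hη)
  exact ((continuous_fst.dotProduct continuous_snd).measurable.comp_aemeasurable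
    (((hcomp hy).sub (hcomp hy')).prodMk (hy.sub hy').aemeasurable)).aestronglyMeasurable

lemma integrable_dotProduct_sub_of_growth {X ι : Type*} [MeasurableSpace X] {μ : Measure X}
    [Fintype ι] {p c : ι → X → ℝ} {K : ι → ℝ} {A B y z : X → ι → ℝ}
    (hp : ∀ᵐ x ∂μ, ∀ i, 1 < p i x) (hK : ∀ i, 0 ≤ K i) (hc : ∀ᵐ x ∂μ, ∀ i, 0 ≤ c i x)
    (hA : ∀ᵐ x ∂μ, ∀ i,
      |A x i| ≤ K i * (modular (p · x) (y x) ^ (1 / conjExp (p i x)) + c i x))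
    (hB : ∀ᵐ x ∂μ, ∀ i,
      |B x i| ≤ K i * (modular (p · x) (z x) ^ (1 / conjExp (p i x)) + c i x))
    (hmeas : AEStronglyMeasurable (fun x => (A x - B x) ⬝ᵥ (y x - z x)) μ)
    (hy : Integrable (fun x => modular (p · x) (y x)) μ)
    (hz : Integrable (fun x => modular (p · x) (z x)) μ)
    (hc_int : ∀ i, Integrable (fun x => c i x ^ conjExp (p i x)) μ) :
    Integrable (fun x => (A x - B x) ⬝ᵥ (y x - z x)) μ := by
  refine Integrable.mono'
    (integrable_finsetSum Finset.univ fun i _ => ((hy.add hz).add (hc_int i)).const_mul (6 * K i))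
    hmeas ?_
  filter_upwards [hp, hc, hA, hB] with x hpx hcx hAx hBx
  calc ‖(A x - B x) ⬝ᵥ (y x - z x)‖
      ≤ ∑ i, |(A x i - B x i) * (y x i - z x i)| := by
        rw [Real.norm_eq_abs]
        exact Finset.abs_sum_le_sum_abs _ _
    _ ≤ _ := Finset.sum_le_sum fun i _ => abs_sub_mul_sub_le (holderConjugate_conjExp (hpx i))
          (hK i) (hcx i) (rpow_le_modular (p := (p · x)) i) (rpow_le_modular (p := (p · x)) i)
          (hAx i) (hBx i)

lemma integrable_modular {X ι : Type*} [MeasurableSpace X] {μ : Measure X} [Fintype ι]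
    {p : ι → X → ℝ} {y : X → ι → ℝ} (hp : ∀ i, Measurable (p i)) (hy : Measurable y)
    (h : ∫⁻ x, ENNReal.ofReal (modular (p · x) (y x)) ∂μ ≠ ∞) :
    Integrable (fun x => modular (p · x) (y x)) μ :=
  (lintegral_ofReal_ne_top_iff_integrable
    (Finset.measurable_sum _ fun i _ =>
      ((measurable_pi_apply i).comp hy).abs.pow (hp i)).aestronglyMeasurable
    (ae_of_all _ fun _ => modular_nonneg)).mp h

theorem stmt_2_general {N : ℕ} (Q : Set (Fin N → ℝ))
    (p : Fin N → (Fin N → ℝ) → ℝ) (hp : ∀ i, Measurable (p i))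
    (pm pM : Fin N → ℝ) (hpm : ∀ i, 1 < pm i)
    (hpb : ∀ᵐ x ∂(volume.restrict Q), ∀ i, pm i ≤ p i x ∧ p i x ≤ pM i)
    (a : (Fin N → ℝ) → ℝ → (Fin N → ℝ) → (Fin N → ℝ))
    (ha_meas : ∀ (s : ℝ) (ξ : Fin N → ℝ), Measurable (fun x => a x s ξ))
    (ha_cont : ∀ᵐ x ∂(volume.restrict Q),
      Continuous (fun sξ : ℝ × (Fin N → ℝ) => a x sξ.1 sξ.2))
    (ahat : Fin N → ℝ → ℝ)
    (hahat_mono : ∀ i, MonotoneOn (ahat i) (Set.Ici 0))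
    (hahat_pos : ∀ i, ∀ t : ℝ, 0 ≤ t → 0 < ahat i t)
    (c : Fin N → (Fin N → ℝ) → ℝ) (hc_meas : ∀ i, Measurable (c i))
    (hc_nonneg : ∀ i, ∀ᵐ x ∂(volume.restrict Q), 0 ≤ c i x)
    (hc_int : ∀ i, ∫⁻ x in Q, ENNReal.ofReal (c i x ^ conjExp (p i x)) < ⊤)
    (hgrowth : ∀ᵐ x ∂(volume.restrict Q), ∀ (s : ℝ) (ξ : Fin N → ℝ) (i : Fin N),
      |a x s ξ i| ≤ ahat i |s| *
        ((∑ j, |ξ j| ^ p j x) ^ (1 / conjExp (p i x)) + c i x))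
    (hmono : ∀ᵐ x ∂(volume.restrict Q), ∀ (s : ℝ) (ξ ξ' : Fin N → ℝ), ξ ≠ ξ' →
      0 < ∑ i, (a x s ξ i - a x s ξ' i) * (ξ i - ξ' i))
    (α : ℝ) (hα : 0 < α)
    (hcoer : ∀ᵐ x ∂(volume.restrict Q), ∀ (s : ℝ) (ξ : Fin N → ℝ),
      α * ∑ i, |ξ i| ^ p i x ≤ ∑ i, a x s ξ i * ξ i)
    (k : ℝ) (hk : 0 < k)
    (w : ℕ → (Fin N → ℝ) → ℝ) (hw_meas : ∀ m, Measurable (w m))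
    (wlim : (Fin N → ℝ) → ℝ)
    (hw_bd : ∀ m, ∀ᵐ x ∂(volume.restrict Q), |w m x| ≤ k)
    (hw_ae : ∀ᵐ x ∂(volume.restrict Q),
      Tendsto (fun m => w m x) atTop (nhds (wlim x)))
    (v : ℕ → (Fin N → ℝ) → Fin N → ℝ) (hv_meas : ∀ m, Measurable (v m))
    (vlim : (Fin N → ℝ) → Fin N → ℝ) (hvlim_meas : Measurable vlim)
    (B : ℝ≥0∞) (hB : B < ⊤)
    (hv_mod : ∀ m, ∫⁻ x in Q, ENNReal.ofReal (∑ i, |v m x i| ^ p i x) ≤ B)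
    (hvlim_mod : ∫⁻ x in Q, ENNReal.ofReal (∑ i, |vlim x i| ^ p i x) < ⊤)
    (hlim : Tendsto (fun m => ∫ x in Q,
        ∑ i, (a x (w m x) (v m x) i - a x (w m x) (vlim x) i) * (v m x i - vlim x i))
      atTop (nhds 0)) :
    ∃ φ : ℕ → ℕ, StrictMono φ ∧
      ∀ᵐ x ∂(volume.restrict Q),
        Tendsto (fun m => v (φ m) x) atTop (nhds (vlim x)) := by
  have hp1 : ∀ᵐ x ∂(volume.restrict Q), ∀ i, 1 < p i x :=
    hpb.mono fun x hx i => (hpm i).trans_le (hx i).1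
  have hc0 : ∀ᵐ x ∂(volume.restrict Q), ∀ i, 0 ≤ c i x := ae_all_iff.mpr hc_nonneg
  have hgrowth_k : ∀ᵐ x ∂(volume.restrict Q), ∀ s, |s| ≤ k → ∀ ξ i,
      |a x s ξ i| ≤ ahat i k * (modular (p · x) ξ ^ (1 / conjExp (p i x)) + c i x) := by
    filter_upwards [hgrowth, hc0] with x hx hcx s hs ξ i
    exact (hx s ξ i).trans (mul_le_mul_of_nonneg_right (hahat_mono i (abs_nonneg s) hk.le hs)
      (add_nonneg (Real.rpow_nonneg modular_nonneg _) (hcx i)))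
  have hc_int' : ∀ i, Integrable (fun x => c i x ^ conjExp (p i x)) (volume.restrict Q) :=
    fun i => (lintegral_ofReal_ne_top_iff_integrable
      ((hc_meas i).pow ((hp i).div ((hp i).sub measurable_const))).aestronglyMeasurable
      ((hc_nonneg i).mono fun x hx => Real.rpow_nonneg hx _)).mp (hc_int i).ne
  have hg_nonneg : ∀ m, 0 ≤ᵐ[volume.restrict Q] fun x =>
      (a x (w m x) (v m x) - a x (w m x) (vlim x)) ⬝ᵥ (v m x - vlim x) := fun m =>
    hmono.mono fun x hx => dotProduct_sub_nonneg_of_strictMonotone (hx (w m x)) _ _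
  have hg_int : ∀ m, Integrable (fun x =>
      (a x (w m x) (v m x) - a x (w m x) (vlim x)) ⬝ᵥ (v m x - vlim x)) (volume.restrict Q) :=
    fun m => integrable_dotProduct_sub_of_growth (A := fun x => a x (w m x) (v m x))
      (B := fun x => a x (w m x) (vlim x)) hp1 (fun i => (hahat_pos i k hk.le).le) hc0
      (by filter_upwards [hgrowth_k, hw_bd m] with x hx hwx using hx _ hwx _)
      (by filter_upwards [hgrowth_k, hw_bd m] with x hx hwx using hx _ hwx _)
      (aestronglyMeasurable_dotProduct_sub_of_caratheodory ha_meas ha_cont (hw_meas m)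
        (hv_meas m) hvlim_meas)
      (integrable_modular hp (hv_meas m) ((hv_mod m).trans_lt hB).ne)
      (integrable_modular hp hvlim_meas hvlim_mod.ne) hc_int'
  obtain ⟨φ, hφ, hφ_ae⟩ := exists_seq_tendsto_ae_zero_of_integral_tendsto_zero hg_nonneg hg_int hlim
  refine ⟨φ, hφ, ?_⟩
  filter_upwards [hφ_ae, hp1, ha_cont, hgrowth_k, hmono, hcoer, ae_all_iff.mpr hw_bd, hw_ae]
    with x hx hpx hcontx hgrowthx hmonox hcoerx hwx hwlimx
  have hexp : ∀ i, 1 / conjExp (p i x) < 1 := fun i => by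
    rw [one_div]; exact inv_lt_one_of_one_lt₀ (holderConjugate_conjExp (hpx i)).symm.lt
  exact tendsto_of_tendsto_dotProduct_sub hpx hexp
    hcontx hgrowthx hmonox hα hcoerx (fun m => hwx (φ m)) (hwlimx.comp hφ.tendsto_atTop) hx

/-- first conclusion of Lemma 2.2 of the paper: a.e. convergence of the
(abstract) gradients.  Under the Leray–Lions structure conditions (growth, strict
monotonicity, coercivity) on `a`, if `w m → w` a.e. with `|w m| ≤ k`, the fields `v m`
are bounded in the anisotropic modular, and
`∫_Q (a(x, w m, v m) − a(x, w m, v))·(v m − v) → 0`, then along a subsequence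
`v m → v` a.e. in `Q`. -/
theorem stmt_2 {N : ℕ} (Q : Set (Fin N → ℝ)) (hQmeas : MeasurableSet Q)
    (hQbd : Bornology.IsBounded Q)
    (p : Fin N → (Fin N → ℝ) → ℝ) (hp : ∀ i, Measurable (p i))
    (pm pM : Fin N → ℝ) (hpm : ∀ i, 1 < pm i)
    (hpb : ∀ᵐ x ∂(volume.restrict Q), ∀ i, pm i ≤ p i x ∧ p i x ≤ pM i)
    (a : (Fin N → ℝ) → ℝ → (Fin N → ℝ) → (Fin N → ℝ))
    (ha_meas : ∀ (s : ℝ) (ξ : Fin N → ℝ), Measurable (fun x => a x s ξ))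
    (ha_cont : ∀ᵐ x ∂(volume.restrict Q),
      Continuous (fun sξ : ℝ × (Fin N → ℝ) => a x sξ.1 sξ.2))
    (ahat : Fin N → ℝ → ℝ) (hahat_cont : ∀ i, Continuous (ahat i))
    (hahat_mono : ∀ i, MonotoneOn (ahat i) (Set.Ici 0))
    (hahat_pos : ∀ i, ∀ t : ℝ, 0 ≤ t → 0 < ahat i t)
    (c : Fin N → (Fin N → ℝ) → ℝ) (hc_meas : ∀ i, Measurable (c i))
    (hc_nonneg : ∀ i, ∀ᵐ x ∂(volume.restrict Q), 0 ≤ c i x)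
    (hc_int : ∀ i, ∫⁻ x in Q, ENNReal.ofReal (c i x ^ conjExp (p i x)) < ⊤)
    (hgrowth : ∀ᵐ x ∂(volume.restrict Q), ∀ (s : ℝ) (ξ : Fin N → ℝ) (i : Fin N),
      |a x s ξ i| ≤ ahat i |s| *
        ((∑ j, |ξ j| ^ p j x) ^ (1 / conjExp (p i x)) + c i x))
    (hmono : ∀ᵐ x ∂(volume.restrict Q), ∀ (s : ℝ) (ξ ξ' : Fin N → ℝ), ξ ≠ ξ' →
      0 < ∑ i, (a x s ξ i - a x s ξ' i) * (ξ i - ξ' i))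
    (α : ℝ) (hα : 0 < α)
    (hcoer : ∀ᵐ x ∂(volume.restrict Q), ∀ (s : ℝ) (ξ : Fin N → ℝ),
      α * ∑ i, |ξ i| ^ p i x ≤ ∑ i, a x s ξ i * ξ i)
    (k : ℝ) (hk : 0 < k)
    (w : ℕ → (Fin N → ℝ) → ℝ) (hw_meas : ∀ m, Measurable (w m))
    (wlim : (Fin N → ℝ) → ℝ) (hwlim_meas : Measurable wlim)
    (hw_bd : ∀ m, ∀ᵐ x ∂(volume.restrict Q), |w m x| ≤ k)
    (hw_ae : ∀ᵐ x ∂(volume.restrict Q),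
      Tendsto (fun m => w m x) atTop (nhds (wlim x)))
    (v : ℕ → (Fin N → ℝ) → Fin N → ℝ) (hv_meas : ∀ m, Measurable (v m))
    (vlim : (Fin N → ℝ) → Fin N → ℝ) (hvlim_meas : Measurable vlim)
    (B : ℝ≥0∞) (hB : B < ⊤)
    (hv_mod : ∀ m, ∫⁻ x in Q, ENNReal.ofReal (∑ i, |v m x i| ^ p i x) ≤ B)
    (hvlim_mod : ∫⁻ x in Q, ENNReal.ofReal (∑ i, |vlim x i| ^ p i x) < ⊤)
    (hlim : Tendsto (fun m => ∫ x in Q,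
        ∑ i, (a x (w m x) (v m x) i - a x (w m x) (vlim x) i) * (v m x i - vlim x i))
      atTop (nhds 0)) :
    ∃ φ : ℕ → ℕ, StrictMono φ ∧
      ∀ᵐ x ∂(volume.restrict Q),
        Tendsto (fun m => v (φ m) x) atTop (nhds (vlim x)) :=
  stmt_2_general Q p hp pm pM hpm hpb a ha_meas ha_cont ahat hahat_mono hahat_pos c hc_meas
    hc_nonneg hc_int hgrowth hmono α hα hcoer k hk w hw_meas wlim hw_bd hw_ae v hv_meas vlim
    hvlim_meas B hB hv_mod hvlim_mod hlim
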